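/- Let G = Z_{p^r} ⋊_α Z_{q^s} with ord(α) = q^t. If H = ⟨x^{p^{i_1}} y^{q^{j_1}}, …, x^{p^{i_n}} y^{q^{j_n}}⟩ where all j_k ≥ t, then H = ⟨x^{p^i} y^{q^j}⟩ where i = min{i_1,…,i_n} and j = min{j_1,…,j_n}. -/

import Mathlib

/-!
Conjugation by `y ^ q ^ j` acts on `⟨x⟩` as `α ^ q ^ j`, which is trivial for `j ≥ t`, so
`y ^ q ^ j` commutes with every power of `x`. A product `a * b` of commuting elements of coprime
orders generates both `a` and `b` (Chinese remainder theorem), so a subgroup contains `a * b` iff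
it contains `a` and `b`. Hence both sides of the claimed equality are generated by their `x`-parts
and `y`-parts separately, and the smallest exponents give the generators of those parts.
-/

open Subgroup

section

variable {G : Type*} [Group G]

theorem Commute.mem_zpowers_mul_of_coprime {a b : G} (h : Commute a b)
    (hco : (orderOf a).Coprime (orderOf b)) : a ∈ zpowers (a * b) := by
  obtain ⟨k, hka, hkb⟩ := Nat.chineseRemainder hco 1 0
  have hpow : (a * b) ^ k = a := by
    rw [h.mul_pow, ← pow_mod_orderOf, hka, pow_mod_orderOf, pow_one,
      ← pow_mod_orderOf b, hkb, Nat.zero_mod, pow_zero, mul_one]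
  simpa only [hpow] using npow_mem_zpowers (a * b) k

theorem Commute.mul_mem_iff_of_coprime {a b : G} (h : Commute a b)
    (hco : (orderOf a).Coprime (orderOf b)) {H : Subgroup G} :
    a * b ∈ H ↔ a ∈ H ∧ b ∈ H := by
  refine ⟨fun hab => ⟨?_, ?_⟩, fun ⟨ha, hb⟩ => mul_mem ha hb⟩
  · exact (zpowers_le.2 hab) (h.mem_zpowers_mul_of_coprime hco)
  · rw [h.eq] at hab
    exact (zpowers_le.2 hab) (h.symm.mem_zpowers_mul_of_coprime hco.symm)

theorem closure_range_pow_mul_pow_eq_zpowers {ι : Type*} {x y : G}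
    (hco : (orderOf x).Coprime (orderOf y)) {u v : ι → ℕ} (hcomm : ∀ k, Commute x (y ^ v k))
    {u₀ v₀ : ℕ} (hu : ∀ k, u₀ ∣ u k) (hv : ∀ k, v₀ ∣ v k) {k₁ k₂ : ι} (hk₁ : u k₁ = u₀)
    (hk₂ : v k₂ = v₀) :
    closure (Set.range fun k => x ^ u k * y ^ v k) = zpowers (x ^ u₀ * y ^ v₀) := by
  have hco' (m n : ℕ) : (orderOf (x ^ m)).Coprime (orderOf (y ^ n)) :=
    (hco.coprime_dvd_left (orderOf_pow_dvd m)).coprime_dvd_right (orderOf_pow_dvd n)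
  have hmem_iff (k : ι) (m : ℕ) {H : Subgroup G} :
      x ^ m * y ^ v k ∈ H ↔ x ^ m ∈ H ∧ y ^ v k ∈ H :=
    ((hcomm k).pow_left m).mul_mem_iff_of_coprime (hco' _ _)
  apply le_antisymm
  · rw [closure_le]
    rintro _ ⟨k, rfl⟩
    obtain ⟨hx₀, hy₀⟩ := (hk₂ ▸ hmem_iff k₂ u₀).1 (mem_zpowers (x ^ u₀ * y ^ v₀))
    obtain ⟨c, hc⟩ := hu k
    obtain ⟨d, hd⟩ := hv k
    simp only [SetLike.mem_coe, hc, hd, pow_mul]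
    exact mul_mem (pow_mem hx₀ c) (pow_mem hy₀ d)
  · rw [zpowers_le, ← hk₂, hmem_iff]
    have hgen (k : ι) : x ^ u k * y ^ v k ∈ closure (Set.range fun k => x ^ u k * y ^ v k) :=
      subset_closure ⟨k, rfl⟩
    exact ⟨hk₁ ▸ ((hmem_iff k₁ _).1 (hgen k₁)).1, ((hmem_iff k₂ _).1 (hgen k₂)).2⟩

theorem conj_pow_eq_pow_pow {x y : G} {m : ℕ}
    (h : y * x * y⁻¹ = x ^ m) (n : ℕ) : y ^ n * x * (y ^ n)⁻¹ = x ^ m ^ n := by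
  induction n with
  | zero => simp
  | succ n ih =>
    calc y ^ (n + 1) * x * (y ^ (n + 1))⁻¹ = y * (y ^ n * x * (y ^ n)⁻¹) * y⁻¹ := by group
      _ = x ^ m ^ (n + 1) := by rw [ih, ← conj_pow, h, ← pow_mul, pow_succ']

theorem commute_pow_of_conj_eq_pow {x y : G} {m k : ℕ}
    (h : y * x * y⁻¹ = x ^ m) (hk : m ^ k ≡ 1 [MOD orderOf x]) : Commute x (y ^ k) := by
  have hconj := conj_pow_eq_pow_pow h k
  rw [(pow_eq_pow_iff_modEq (n := m ^ k) (m := 1)).2 hk, pow_one, mul_inv_eq_iff_eq_mul] at hconj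
  exact hconj.symm

end

theorem ZMod.val_pow_modEq_one_of_orderOf_dvd {n : ℕ} [NeZero n] {u : (ZMod n)ˣ} {k : ℕ}
    (hk : orderOf u ∣ k) : (u : ZMod n).val ^ k ≡ 1 [MOD n] := by
  rw [← ZMod.natCast_eq_natCast_iff, Nat.cast_pow, ZMod.natCast_zmod_val,
    ← Units.val_pow_eq_pow_val, orderOf_dvd_iff_pow_eq_one.1 hk, Units.val_one, Nat.cast_one]

theorem stmt_12_general (p q r s t : ℕ) (hp : p.Prime) (hq : q.Prime) (hpq : p ≠ q)
    (G : Type*) [Group G] (x y : G)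
    (α : (ZMod (p ^ r))ˣ) (hα : orderOf α = q ^ t)
    (hx : orderOf x = p ^ r) (hy : orderOf y = q ^ s)
    (hcomm : y * x * y⁻¹ = x ^ ((α : ZMod (p ^ r)).val)) :
    ∀ n : ℕ, 0 < n → ∀ i j : Fin n → ℕ,
      (∀ k, i k ≤ r) → (∀ k, t ≤ j k) → (∀ k, j k ≤ s) →
      ∀ i0 j0 : ℕ,
        (∀ k, i0 ≤ i k) → (∃ k, i k = i0) →
        (∀ k, j0 ≤ j k) → (∃ k, j k = j0) →
        Subgroup.closure (Set.range fun k => x ^ p ^ i k * y ^ q ^ j k) =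
          Subgroup.zpowers (x ^ p ^ i0 * y ^ q ^ j0) := by
  intro n _ i j _ hjt _ i0 j0 hi0 ⟨k₁, hk₁⟩ hj0 ⟨k₂, hk₂⟩
  have : NeZero (p ^ r) := ⟨pow_ne_zero r hp.ne_zero⟩
  have hco : (orderOf x).Coprime (orderOf y) := by
    rw [hx, hy]
    exact Nat.Coprime.pow r s ((Nat.coprime_primes hp hq).2 hpq)
  have hcommute (k : Fin n) : Commute x (y ^ q ^ j k) := by
    refine commute_pow_of_conj_eq_pow hcomm ?_
    rw [hx]
    exact ZMod.val_pow_modEq_one_of_orderOf_dvd (hα ▸ pow_dvd_pow q (hjt k))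
  exact closure_range_pow_mul_pow_eq_zpowers hco hcommute (fun k => pow_dvd_pow p (hi0 k))
    (fun k => pow_dvd_pow q (hj0 k)) (congrArg (p ^ ·) hk₁) (congrArg (q ^ ·) hk₂)

theorem stmt_12 (p q r s t : ℕ) (hp : p.Prime) (hq : q.Prime) (hpq : p ≠ q)
    (hpodd : Odd p) (hqodd : Odd q)
    (hr : 0 < r) (hs : 0 < s) (ht : 1 ≤ t) (hts : t ≤ s)
    (G : Type*) [Group G] (x y : G)
    (α : (ZMod (p ^ r))ˣ) (hα : orderOf α = q ^ t)
    (hx : orderOf x = p ^ r) (hy : orderOf y = q ^ s)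
    (hcomm : y * x * y⁻¹ = x ^ ((α : ZMod (p ^ r)).val))
    (hgen : Subgroup.closure {x, y} = ⊤)
    (hcard : Nat.card G = p ^ r * q ^ s) :
    ∀ n : ℕ, 0 < n → ∀ i j : Fin n → ℕ,
      (∀ k, i k ≤ r) → (∀ k, t ≤ j k) → (∀ k, j k ≤ s) →
      ∀ i0 j0 : ℕ,
        (∀ k, i0 ≤ i k) → (∃ k, i k = i0) →
        (∀ k, j0 ≤ j k) → (∃ k, j k = j0) →
        Subgroup.closure (Set.range fun k => x ^ p ^ i k * y ^ q ^ j k) =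
          Subgroup.zpowers (x ^ p ^ i0 * y ^ q ^ j0) :=
  stmt_12_general p q r s t hp hq hpq G x y α hα hx hy hcomm
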